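/- Let g(t) = Σ_k a_k t^k be a polynomial with complex coefficients and n a positive integer. Then g(t) is divisible by ([n]_t)^{ℓ+1} if and only if the congruences (1/n)·g(t) ≡ Σ_{k ≡ 0 mod n} a_k t^k ≡ Σ_{k ≡ 1 mod n} a_k t^k ≡ ... ≡ Σ_{k ≡ n-1 mod n} a_k t^k hold modulo (1-t)^{ℓ+1}. -/

import Mathlib

/-!
Let `ζ` be a primitive `n`-th root of unity and `g_j` the part of `g` with exponents `≡ j mod n`.
Then `g(ζ^s t) = ∑_j ζ^{sj} g_j(t)`, and inverting this discrete Fourier transform,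
`n g_j(t) = ∑_s ζ^{-js} g(ζ^s t)`. Since `[n]_t = ∏_{0<s<n} (t - ζ^s)` has simple roots,
`[n]_t^{ℓ+1} ∣ g` iff `(1 - t)^{ℓ+1} ∣ g(ζ^s t)` for every `0 < s < n`. The inversion formula,
whose `s = 0` term is `g`, turns this into `(1 - t)^{ℓ+1} ∣ g_j - g/n` for all `j`; conversely
`g(ζ^s t) = ∑_j ζ^{sj} (g_j - g/n)` because `∑_j ζ^{sj} = 0` for `0 < s < n`.
-/

open Polynomial Finset

section

variable {K : Type*} [Field K]

noncomputable def residuePart (n j : ℕ) (g : K[X]) : K[X] :=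
  ∑ k ∈ range (g.natDegree + 1), if k % n = j then C (g.coeff k) * X ^ k else 0

lemma coeff_residuePart (n j k : ℕ) (g : K[X]) :
    (residuePart n j g).coeff k = if k % n = j then g.coeff k else 0 := by
  have hterm : ∀ i, (if i % n = j then C (g.coeff i) * X ^ i else 0) =
      C (if i % n = j then g.coeff i else 0) * X ^ i := fun i => by split_ifs <;> simp
  simp only [residuePart, hterm, finsetSum_coeff, coeff_C_mul_X_pow, sum_ite_eq, mem_range]
  split_ifs with hk hkj hkj <;> try rfl
  exact (coeff_eq_zero_of_natDegree_lt (by omega)).symm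

lemma comp_C_mul_X_eq_sum_residuePart {ω : K} {n : ℕ} (hn : 0 < n) (hω : ω ^ n = 1)
    (g : K[X]) : g.comp (C ω * X) = ∑ j ∈ range n, C (ω ^ j) * residuePart n j g := by
  ext k
  simp only [comp_C_mul_X_coeff, finsetSum_coeff, coeff_C_mul, coeff_residuePart, mul_ite,
    mul_zero, sum_ite_eq, mem_range, Nat.mod_lt k hn, if_true]
  rw [mul_comm, ← pow_eq_pow_mod k hω]

lemma geom_sum_eq_zero_of_pow_eq_one {ω : K} {n : ℕ} (h : ω ^ n = 1) (hω : ω ≠ 1) :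
    ∑ i ∈ range n, ω ^ i = 0 := by
  rw [geom_sum_eq hω, h, sub_self, zero_div]

lemma X_sub_C_pow_dvd_iff_one_sub_X_pow_dvd_comp {a : K} (ha : a ≠ 0) (m : ℕ) (g : K[X]) :
    (X - C a) ^ m ∣ g ↔ (1 - X) ^ m ∣ g.comp (C a * X) := by
  let _ := invertibleOfNonzero ha
  have h := dvd_comp_C_mul_X_add_C_iff ((1 - X) ^ m) g a 0
  rw [C_0, add_zero, sub_zero, pow_comp, sub_comp, one_comp, X_comp, invOf_eq_inv] at h
  have hfactor : 1 - C a⁻¹ * X = C (-a⁻¹) * (X - C a) := by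
    rw [mul_sub, ← C_mul, neg_mul, inv_mul_cancel₀ ha, C_neg, C_neg, C_1]; ring
  have hunit : IsUnit (C (-a⁻¹) ^ m) := (isUnit_C.2 (by simpa using ha)).pow m
  rw [h, hfactor, mul_pow, hunit.mul_left_dvd]

lemma prod_X_sub_C_pow_dvd_iff {ι : Type*} {t : Finset ι} {f : ι → K} (hf : Set.InjOn f t)
    (m : ℕ) (g : K[X]) :
    (∏ i ∈ t, (X - C (f i))) ^ m ∣ g ↔ ∀ i ∈ t, (X - C (f i)) ^ m ∣ g := by
  rw [← prod_pow]
  refine ⟨fun h i hi => (dvd_prod_of_mem (fun i => (X - C (f i)) ^ m) hi).trans h,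
    prod_dvd_of_coprime fun i hi i' hi' hne => ?_⟩
  exact (isCoprime_X_sub_C_of_isUnit_sub (sub_ne_zero.2 (hf.ne hi hi' hne)).isUnit).pow

namespace IsPrimitiveRoot

variable {ζ : K} {n : ℕ}

lemma geom_sum_X_eq_prod (hζ : IsPrimitiveRoot ζ n) (hn : 0 < n) :
    ∑ i ∈ range n, (X : K[X]) ^ i = ∏ s ∈ Ico 1 n, (X - C (ζ ^ s)) := by
  have h := X_pow_sub_C_eq_prod hζ hn (one_pow n)
  rw [range_eq_Ico, prod_eq_prod_Ico_succ_bot hn, pow_zero, one_mul, C_1, ← geom_sum_mul] at h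
  simp only [mul_one] at h
  exact mul_right_cancel₀ (X_sub_C_ne_zero 1) (h.trans (mul_comm _ _))

lemma geom_sum_X_pow_dvd_iff (hζ : IsPrimitiveRoot ζ n) (hn : 0 < n) (m : ℕ) (g : K[X]) :
    (∑ i ∈ range n, (X : K[X]) ^ i) ^ m ∣ g ↔
      ∀ s ∈ Ico 1 n, (1 - X) ^ m ∣ g.comp (C (ζ ^ s) * X) := by
  have hinj : Set.InjOn (ζ ^ ·) (Ico 1 n) := hζ.injOn_pow.mono (by simp [Set.subset_def])
  rw [hζ.geom_sum_X_eq_prod hn, prod_X_sub_C_pow_dvd_iff hinj]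
  simp_rw [X_sub_C_pow_dvd_iff_one_sub_X_pow_dvd_comp (pow_ne_zero _ (hζ.ne_zero hn.ne'))]

lemma sum_inv_pow_mul_comp_C_mul_X (hζ : IsPrimitiveRoot ζ n) {j : ℕ} (hj : j < n)
    (g : K[X]) :
    ∑ s ∈ range n, C ((ζ ^ j)⁻¹ ^ s) * g.comp (C (ζ ^ s) * X) = C (n : K) * residuePart n j g := by
  have hroot : ∀ s, (ζ ^ s) ^ n = 1 := fun s => by rw [pow_right_comm, hζ.pow_eq_one, one_pow]
  have hζj : ζ ^ j ≠ 0 := pow_ne_zero _ (hζ.ne_zero hj.pos.ne')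
  simp_rw [comp_C_mul_X_eq_sum_residuePart hj.pos (hroot _), mul_sum, ← mul_assoc, ← C_mul]
  rw [sum_comm, sum_eq_single j]
  · simp_rw [← sum_mul, ← map_sum, pow_right_comm _ _ j, ← mul_pow, inv_mul_cancel₀ hζj]
    simp
  · intro i hi hij
    have hω : (ζ ^ j)⁻¹ * ζ ^ i ≠ 1 := by
      rw [Ne, inv_mul_eq_one₀ hζj]
      exact fun h => hij (hζ.pow_inj (mem_range.1 hi) hj h.symm)
    have hωn : ((ζ ^ j)⁻¹ * ζ ^ i) ^ n = 1 := by
      rw [mul_pow, inv_pow, hroot, hroot, inv_one, one_mul]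
    simp_rw [← sum_mul, ← map_sum, pow_right_comm _ _ i, ← mul_pow,
      geom_sum_eq_zero_of_pow_eq_one hωn hω, C_0, zero_mul]
  · exact fun h => absurd (mem_range.2 hj) h

lemma forall_dvd_comp_C_mul_X_iff (hζ : IsPrimitiveRoot ζ n) (hn : 0 < n) (d g : K[X]) :
    (∀ s ∈ Ico 1 n, d ∣ g.comp (C (ζ ^ s) * X)) ↔
      ∀ j < n, d ∣ C (n : K)⁻¹ * g - residuePart n j g := by
  constructor
  · intro h j hj
    have hsum := hζ.sum_inv_pow_mul_comp_C_mul_X hj g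
    rw [range_eq_Ico, sum_eq_sum_Ico_succ_bot hn] at hsum
    simp only [zero_add, pow_zero, C_1, one_mul, comp_X] at hsum
    have hn0 : (n : K) ≠ 0 := by
      have : NeZero n := ⟨hn.ne'⟩
      exact hζ.neZero'.out
    have hC : C (n : K)⁻¹ * C (n : K) = 1 := by rw [← C_mul, inv_mul_cancel₀ hn0, C_1]
    have hfilter : C (n : K)⁻¹ * g - residuePart n j g = -(C (n : K)⁻¹ *
        ∑ s ∈ Ico 1 n, C ((ζ ^ j)⁻¹ ^ s) * g.comp (C (ζ ^ s) * X)) := by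
      linear_combination C (n : K)⁻¹ * hsum + residuePart n j g * hC
    rw [hfilter, dvd_neg]
    exact (dvd_sum fun s hs => (h s hs).mul_left _).mul_left _
  · intro h s hs
    obtain ⟨hs0, hsn⟩ := mem_Ico.1 hs
    have hroot : (ζ ^ s) ^ n = 1 := by rw [pow_right_comm, hζ.pow_eq_one, one_pow]
    have hgeom := geom_sum_eq_zero_of_pow_eq_one hroot (hζ.pow_ne_one_of_pos_of_lt (by omega) hsn)
    have hshift : ∑ j ∈ range n, C ((ζ ^ s) ^ j) * residuePart n j g =
        ∑ j ∈ range n, C ((ζ ^ s) ^ j) * (residuePart n j g - C (n : K)⁻¹ * g) := by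
      simp_rw [mul_sub, sum_sub_distrib, ← mul_assoc, ← sum_mul, ← map_sum, hgeom, C_0,
        zero_mul, sub_zero]
    rw [comp_C_mul_X_eq_sum_residuePart hn hroot, hshift]
    exact dvd_sum fun j hj => (dvd_sub_comm.1 (h j (mem_range.1 hj))).mul_left _

end IsPrimitiveRoot

end

/-- `g(t)` is divisible by `([n]_t)^(ℓ+1)` iff
`(1/n)·g(t) ≡ ∑_{k ≡ j mod n} a_k t^k  (mod (1-t)^(ℓ+1))` for every residue `j < n`
(this expresses the chain of congruences between `(1/n)g` and all the residue-parts). -/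
theorem stmt1 (g : Polynomial ℂ) (n : ℕ) (hn : 0 < n) (ℓ : ℕ) :
    ((∑ i ∈ Finset.range n, (X : Polynomial ℂ) ^ i) ^ (ℓ + 1) ∣ g) ↔
      ∀ j < n, (1 - X : Polynomial ℂ) ^ (ℓ + 1) ∣
        (Polynomial.C ((n : ℂ))⁻¹ * g -
          ∑ k ∈ Finset.range (g.natDegree + 1),
            if k % n = j then Polynomial.C (g.coeff k) * X ^ k else 0) := by
  have hζ := Complex.isPrimitiveRoot_exp n hn.ne'
  exact (hζ.geom_sum_X_pow_dvd_iff hn _ g).trans (hζ.forall_dvd_comp_C_mul_X_iff hn _ g)
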